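/- Global depolarization preserves (non-)membership in Ω₀ before the infinite-time limit: for every density matrix ρ on ℂ^{dA} ⊗ ℂ^{dB} and every t ∈ [0,1), the state (1−t)·ρ + t·(I/d) belongs to Ω₀ if and only if ρ belongs to Ω₀. In particular, if ρ ∉ Ω₀ then the whole segment {(1−t)ρ + t·I/d : t ∈ [0,1)} consists of states outside Ω₀. -/

import Mathlib

open Matrix MeasureTheory
open scoped Kronecker ComplexOrder

/-- A density matrix: positive semidefinite with unit trace. -/
def IsDensityMatrix {n : Type*} [Fintype n] (ρ : Matrix n n ℂ) : Prop :=
  ρ.PosSemidef ∧ ρ.trace = 1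

/-- Partial trace over the second subsystem. -/
noncomputable def ptraceB {dA dB : ℕ} (ρ : Matrix (Fin dA × Fin dB) (Fin dA × Fin dB) ℂ) :
    Matrix (Fin dA) (Fin dA) ℂ :=
  Matrix.of fun a a' => ∑ b, ρ (a, b) (a', b)

/-- Zero-discord (classical-quantum) states: block diagonal in some
orthonormal local basis of the first subsystem. -/
def IsZeroDiscord {dA dB : ℕ} (ρ : Matrix (Fin dA × Fin dB) (Fin dA × Fin dB) ℂ) : Prop :=
  ∃ (v : Fin dA → (Fin dA → ℂ)) (p : Fin dA → ℝ)
    (σ : Fin dA → Matrix (Fin dB) (Fin dB) ℂ),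
      (∀ j k, star (v j) ⬝ᵥ v k = if j = k then 1 else 0) ∧
      (∀ j, 0 ≤ p j) ∧ (∑ j, p j = 1) ∧
      (∀ j, IsDensityMatrix (σ j)) ∧
      ρ = ∑ j, (p j : ℂ) • (Matrix.vecMulVec (v j) (star (v j)) ⊗ₖ σ j)

/-!
A state has zero discord exactly when it is a density matrix fixed by the local dephasing map
`X ↦ ∑ⱼ vⱼvⱼ* ⊗ (vⱼ* ⊗ 1) X (vⱼ ⊗ 1)` of some orthonormal basis `v` of the first factor: the
blocks `(vⱼ* ⊗ 1) ρ (vⱼ ⊗ 1)` are automatically positive, and their traces are the weights.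
Each dephasing map is linear and fixes the identity, so for `t < 1` it fixes `(1 - t) ρ + t I/d`
if and only if it fixes `ρ`; and depolarizing keeps a density matrix a density matrix.
-/

lemma Matrix.sum_kronecker {ι α l m n p : Type*} [NonUnitalNonAssocSemiring α] (s : Finset ι)
    (A : ι → Matrix l m α) (B : Matrix n p α) : (∑ i ∈ s, A i) ⊗ₖ B = ∑ i ∈ s, A i ⊗ₖ B := by
  ext
  simp [Matrix.sum_apply, Finset.sum_mul]

section Compression

variable {ι m n : Type*} [Fintype ι] [Fintype m] [Fintype n] [DecidableEq n]

def vecKroneckerOne (w : m → ℂ) : Matrix (m × n) n ℂ :=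
  of fun p b => w p.1 * (1 : Matrix n n ℂ) p.2 b

def compressLeft (w : m → ℂ) : Matrix (m × n) (m × n) ℂ →ₗ[ℂ] Matrix n n ℂ where
  toFun X := (vecKroneckerOne (n := n) w)ᴴ * X * vecKroneckerOne (n := n) w
  map_add' X Y := by rw [Matrix.mul_add, Matrix.add_mul]
  map_smul' c X := by rw [Matrix.mul_smul, Matrix.smul_mul, RingHom.id_apply]

lemma compressLeft_apply (w : m → ℂ) (X : Matrix (m × n) (m × n) ℂ) :
    compressLeft w X = (vecKroneckerOne (n := n) w)ᴴ * X * vecKroneckerOne (n := n) w := rfl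

lemma compressLeft_kronecker (w : m → ℂ) (A : Matrix m m ℂ) (X : Matrix n n ℂ) :
    compressLeft w (A ⊗ₖ X) = (star w ⬝ᵥ (A *ᵥ w)) • X := by
  ext b b'
  simp only [compressLeft_apply, vecKroneckerOne, one_apply, mul_ite, mul_one, mul_zero,
    mul_apply, conjTranspose_apply, of_apply, apply_ite star, RCLike.star_def, star_zero,
    kroneckerMap_apply, ite_mul, zero_mul, Fintype.sum_prod_type, Finset.sum_ite_eq',
    Finset.mem_univ, ↓reduceIte, Finset.sum_mul, dotProduct, Pi.star_apply, mulVec,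
    Finset.mul_sum, Matrix.smul_apply, smul_eq_mul]
  rw [Finset.sum_comm]
  exact Finset.sum_congr rfl fun _ _ => Finset.sum_congr rfl fun _ _ => by ring

lemma Matrix.PosSemidef.compressLeft {X : Matrix (m × n) (m × n) ℂ} (hX : X.PosSemidef)
    (w : m → ℂ) : (compressLeft w X).PosSemidef :=
  hX.conjTranspose_mul_mul_same _

def dephase (v : ι → m → ℂ) : Matrix (m × n) (m × n) ℂ →ₗ[ℂ] Matrix (m × n) (m × n) ℂ :=
  ∑ j, (kroneckerBilinear (R := ℂ) (vecMulVec (v j) (star (v j)))).comp (compressLeft (v j))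

lemma dephase_apply (v : ι → m → ℂ) (X : Matrix (m × n) (m × n) ℂ) :
    dephase v X = ∑ j, vecMulVec (v j) (star (v j)) ⊗ₖ compressLeft (v j) X := by
  simp only [dephase, LinearMap.sum_apply, LinearMap.comp_apply]
  rfl

end Compression

section Orthonormal

variable {ι m n : Type*} [Fintype ι] [DecidableEq ι] [Fintype m] [Fintype n] {v : ι → m → ℂ}
  (hv : ∀ j k, star (v j) ⬝ᵥ v k = if j = k then 1 else 0)
include hv

lemma trace_sum_kronecker (D : ι → Matrix n n ℂ) :
    (∑ k, vecMulVec (v k) (star (v k)) ⊗ₖ D k).trace = ∑ k, (D k).trace := by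
  simp [trace_sum, trace_kronecker, dotProduct_comm _ (star _), hv]

variable [DecidableEq n]

lemma compressLeft_sum_kronecker (D : ι → Matrix n n ℂ) (j : ι) :
    compressLeft (v j) (∑ k, vecMulVec (v k) (star (v k)) ⊗ₖ D k) = D j := by
  simp only [map_sum, compressLeft_kronecker, vecMulVec_mulVec, op_smul_eq_smul, dotProduct_smul,
    hv, smul_eq_mul]
  simp

lemma dephase_eq_self_iff {X : Matrix (m × n) (m × n) ℂ} :
    dephase v X = X ↔ ∃ D : ι → Matrix n n ℂ, X = ∑ k, vecMulVec (v k) (star (v k)) ⊗ₖ D k := by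
  refine ⟨fun h => ⟨_, (dephase_apply v X).symm.trans h |>.symm⟩, ?_⟩
  rintro ⟨D, rfl⟩
  simp only [dephase_apply, compressLeft_sum_kronecker hv]

end Orthonormal

section OrthonormalBasis

variable {m n : Type*} [Fintype m] [DecidableEq m] [Fintype n] [DecidableEq n] {v : m → m → ℂ}
  (hv : ∀ j k, star (v j) ⬝ᵥ v k = if j = k then 1 else 0)
include hv

lemma sum_vecMulVec_star_eq_one : ∑ j, vecMulVec (v j) (star (v j)) = 1 := by
  let U : Matrix m m ℂ := of fun i j => v j i
  have hU : Uᴴ * U = 1 := by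
    ext j k
    simpa [U, mul_apply, one_apply, dotProduct] using hv j k
  calc ∑ j, vecMulVec (v j) (star (v j)) = U * Uᴴ := by
        ext i i'
        simp [U, mul_apply, Matrix.sum_apply, vecMulVec_apply]
    _ = 1 := mul_eq_one_comm.mp hU

lemma dephase_one : dephase v (1 : Matrix (m × n) (m × n) ℂ) = 1 := by
  have hcompress : ∀ j, compressLeft (v j) (1 : Matrix (m × n) (m × n) ℂ) = 1 := fun j => by
    rw [← one_kronecker_one, compressLeft_kronecker, one_mulVec, hv, if_pos rfl, one_smul]
  simp only [dephase_apply, hcompress, ← sum_kronecker, sum_vecMulVec_star_eq_one hv,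
    one_kronecker_one]

lemma dephase_smul_add_smul_one_eq_self_iff {a : ℂ} (ha : a ≠ 0) (b : ℂ)
    (X : Matrix (m × n) (m × n) ℂ) :
    dephase v (a • X + b • 1) = a • X + b • 1 ↔ dephase v X = X := by
  rw [map_add, map_smul, map_smul, dephase_one hv, add_left_inj, smul_right_inj ha]

end OrthonormalBasis

section Density

variable {n : Type*} [Fintype n]

lemma IsDensityMatrix.nonempty {ρ : Matrix n n ℂ} (hρ : IsDensityMatrix ρ) : Nonempty n := by
  rw [← not_isEmpty_iff]
  intro
  simpa [trace] using hρ.2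

lemma isDensityMatrix_inv_card_smul_one [DecidableEq n] [Nonempty n] :
    IsDensityMatrix ((Fintype.card n : ℂ)⁻¹ • (1 : Matrix n n ℂ)) :=
  ⟨PosSemidef.one.smul (inv_nonneg.mpr (Nat.cast_nonneg _)), by simp [Fintype.card_ne_zero]⟩

lemma IsDensityMatrix.real_smul_add_real_smul {ρ σ : Matrix n n ℂ} (hρ : IsDensityMatrix ρ)
    (hσ : IsDensityMatrix σ) {t : ℝ} (ht0 : 0 ≤ t) (ht1 : t ≤ 1) :
    IsDensityMatrix (((1 - t : ℝ) : ℂ) • ρ + (t : ℂ) • σ) := by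
  refine ⟨(hρ.1.smul ?_).add (hσ.1.smul ?_), ?_⟩
  · exact_mod_cast sub_nonneg.2 ht1
  · exact_mod_cast ht0
  · simp [trace_add, trace_smul, hρ.2, hσ.2]

lemma Matrix.PosSemidef.exists_isDensityMatrix_eq_smul [DecidableEq n] [Nonempty n]
    {B : Matrix n n ℂ} (hB : B.PosSemidef) :
    ∃ σ, IsDensityMatrix σ ∧ B = (B.trace.re : ℂ) • σ := by
  rw [← Complex.eq_re_of_ofReal_le (r := 0) (by simpa using hB.trace_nonneg)]
  by_cases h : B.trace = 0
  · exact ⟨_, isDensityMatrix_inv_card_smul_one, by simp [hB.trace_eq_zero_iff.mp h]⟩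
  · refine ⟨B.trace⁻¹ • B, ⟨hB.smul (inv_nonneg.mpr hB.trace_nonneg), ?_⟩, ?_⟩
    · rw [trace_smul, smul_eq_mul, inv_mul_cancel₀ h]
    · rw [smul_smul, mul_inv_cancel₀ h, one_smul]

end Density

lemma isZeroDiscord_iff {dA dB : ℕ} {ρ : Matrix (Fin dA × Fin dB) (Fin dA × Fin dB) ℂ} :
    IsZeroDiscord ρ ↔ IsDensityMatrix ρ ∧ ∃ v : Fin dA → Fin dA → ℂ,
      (∀ j k, star (v j) ⬝ᵥ v k = if j = k then 1 else 0) ∧ dephase v ρ = ρ := by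
  constructor
  · rintro ⟨v, p, σ, hv, hp, hp1, hσ, rfl⟩
    simp_rw [← kronecker_smul]
    refine ⟨⟨posSemidef_sum _ fun j _ => ?_, ?_⟩, v, hv, (dephase_eq_self_iff hv).2 ⟨_, rfl⟩⟩
    · exact (posSemidef_vecMulVec_self_star _).kronecker ((hσ j).1.smul (by exact_mod_cast hp j))
    · simp [trace_sum_kronecker hv, trace_smul, fun j => (hσ j).2]
      exact_mod_cast hp1
  · rintro ⟨hρ, v, hv, hdephase⟩
    have : Nonempty (Fin dB) := hρ.nonempty.map Prod.snd
    choose σ hσ hσ_eq using fun j => (hρ.1.compressLeft (v j)).exists_isDensityMatrix_eq_smul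
    refine ⟨v, fun j => (compressLeft (v j) ρ).trace.re, σ, hv, fun j => ?_, ?_, hσ, ?_⟩
    · exact Complex.nonneg_iff.mp ((hρ.1.compressLeft (v j)).trace_nonneg) |>.1
    · rw [← Complex.re_sum, ← trace_sum_kronecker hv, ← dephase_apply, hdephase, hρ.2,
        Complex.one_re]
    · conv_lhs => rw [← hdephase, dephase_apply]
      refine Finset.sum_congr rfl fun j _ => ?_
      rw [← kronecker_smul, ← hσ_eq]

theorem depolarization_zeroDiscord_iff_general (dA dB : ℕ)
    (ρ : Matrix (Fin dA × Fin dB) (Fin dA × Fin dB) ℂ) (hρ : IsDensityMatrix ρ)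
    (t : ℝ) (ht : t ∈ Set.Ico (0 : ℝ) 1) :
    IsZeroDiscord (((1 - t : ℝ) : ℂ) • ρ +
        (t : ℂ) • ((((dA * dB : ℕ) : ℂ))⁻¹ •
          (1 : Matrix (Fin dA × Fin dB) (Fin dA × Fin dB) ℂ))) ↔
      IsZeroDiscord ρ := by
  have := hρ.nonempty
  have hcard : ((dA * dB : ℕ) : ℂ) = Fintype.card (Fin dA × Fin dB) := by simp
  have hdepolarized := hρ.real_smul_add_real_smul isDensityMatrix_inv_card_smul_one ht.1 ht.2.le
  have h1t : ((1 - t : ℝ) : ℂ) ≠ 0 := Complex.ofReal_ne_zero.mpr (sub_pos.mpr ht.2).ne'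
  rw [isZeroDiscord_iff, isZeroDiscord_iff, hcard]
  refine and_congr (iff_of_true hdepolarized hρ) ?_
  rw [smul_smul]
  exact exists_congr fun v => and_congr_right fun hv =>
    dephase_smul_add_smul_one_eq_self_iff hv h1t _ ρ

/-- Global depolarization preserves (non-)membership in `Ω₀`
before the infinite-time limit: for a density matrix `ρ` and `t ∈ [0,1)`, the
depolarized state `(1-t)·ρ + t·I/d` has zero discord iff `ρ` does. In
particular, if `ρ ∉ Ω₀`, the whole open segment towards `I/d` stays outside
`Ω₀`. -/
theorem depolarization_zeroDiscord_iff (dA dB : ℕ) (hdA : 0 < dA) (hdB : 0 < dB)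
    (ρ : Matrix (Fin dA × Fin dB) (Fin dA × Fin dB) ℂ) (hρ : IsDensityMatrix ρ)
    (t : ℝ) (ht : t ∈ Set.Ico (0 : ℝ) 1) :
    IsZeroDiscord (((1 - t : ℝ) : ℂ) • ρ +
        (t : ℂ) • ((((dA * dB : ℕ) : ℂ))⁻¹ •
          (1 : Matrix (Fin dA × Fin dB) (Fin dA × Fin dB) ℂ))) ↔
      IsZeroDiscord ρ :=
  depolarization_zeroDiscord_iff_general dA dB ρ hρ t ht
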